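/- Let N ≥ 2 be odd. There exists a constant M < ∞, depending only on N and max_i ‖aᵢ‖_{L∞}, with the following property: if u : ℝ × ℝⁿ → ℝ is a smooth global solution of the PDE ∂u/∂t = Δu + P(u) that is bounded on each slab [−T, T] × ℝⁿ (T > 0), then u is bounded on all of ℝ^{n+1} with sup_{ℝ^{n+1}} |u| ≤ M. -/

import Mathlib

open MeasureTheory Filter Topology
open scoped ENNReal

noncomputable section

/-- Euclidean space `ℝⁿ`. -/
abbrev Spc (n : ℕ) := EuclideanSpace ℝ (Fin n)

/-- The Laplacian in the spatial variables. -/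
noncomputable def lap {n : ℕ} (f : Spc n → ℝ) (x : Spc n) : ℝ :=
  ∑ i : Fin n, fderiv ℝ (fun y => fderiv ℝ f y (EuclideanSpace.single i 1)) x
    (EuclideanSpace.single i 1)

/-- The polynomial nonlinearity `P(f)(x) = -f(x)^N + ∑_{i<N} aᵢ(x) f(x)^i`. -/
noncomputable def Pfun {n N : ℕ} (a : Fin N → Spc n → ℝ) (f : Spc n → ℝ) (x : Spc n) : ℝ :=
  -(f x) ^ N + ∑ i : Fin N, a i x * f x ^ (i : ℕ)

/-- The time derivative `∂u/∂t`. -/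
noncomputable def timeDeriv {n : ℕ} (u : ℝ × Spc n → ℝ) (t : ℝ) (x : Spc n) : ℝ :=
  deriv (fun s => u (s, x)) t

/-- `u` is a global solution of `∂u/∂t = Δu + P(u)`. -/
def IsSol {n N : ℕ} (a : Fin N → Spc n → ℝ) (u : ℝ × Spc n → ℝ) : Prop :=
  ∀ t x, timeDeriv u t x = lap (fun y => u (t, y)) x + Pfun a (fun y => u (t, y)) x

/-- `w` is an equilibrium: `Δw + P(w) = 0`. -/
def IsEquilibrium {n N : ℕ} (a : Fin N → Spc n → ℝ) (w : Spc n → ℝ) : Prop :=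
  ∀ x, lap w x + Pfun a w x = 0

/-- The energy density `|∂u/∂t|² + |Δu + P(u)|²`. -/
noncomputable def energyDensity {n N : ℕ} (a : Fin N → Spc n → ℝ) (u : ℝ × Spc n → ℝ)
    (t : ℝ) (x : Spc n) : ℝ :=
  (timeDeriv u t x) ^ 2 + (lap (fun y => u (t, y)) x + Pfun a (fun y => u (t, y)) x) ^ 2

/-- The energy `E(u) = (1/2) ∫_ℝ ∫_{ℝⁿ} (|∂u/∂t|² + |Δu + P(u)|²) dx dt`, valued in `ℝ≥0∞`. -/
noncomputable def energy {n N : ℕ} (a : Fin N → Spc n → ℝ) (u : ℝ × Spc n → ℝ) : ℝ≥0∞ :=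
  (1 / 2) * ∫⁻ t : ℝ, ∫⁻ x : Spc n, ENNReal.ofReal (energyDensity a u t x)

/-- The action density `(1/2)|∇f|² + f^{N+1}/(N+1) - ∑_{i<N} aᵢ f^{i+1}/(i+1)`. -/
noncomputable def actionDensity {n N : ℕ} (a : Fin N → Spc n → ℝ) (f : Spc n → ℝ)
    (x : Spc n) : ℝ :=
  (1 / 2) * ‖gradient f x‖ ^ 2 + f x ^ (N + 1) / (N + 1)
    - ∑ i : Fin N, a i x * f x ^ ((i : ℕ) + 1) / ((i : ℕ) + 1)

/-- The action functional `A(f)`. -/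
noncomputable def action {n N : ℕ} (a : Fin N → Spc n → ℝ) (f : Spc n → ℝ) : ℝ :=
  ∫ x : Spc n, actionDensity a f x

/-- `f` has finite action. -/
def FiniteAction {n N : ℕ} (a : Fin N → Spc n → ℝ) (f : Spc n → ℝ) : Prop :=
  Integrable (actionDensity a f)

/-- The coefficients `aᵢ` are smooth, in `L¹ ∩ L∞`, with all derivatives of all orders
bounded. -/
def GoodCoeffs {n N : ℕ} (a : Fin N → Spc n → ℝ) : Prop :=
  ∀ i, ContDiff ℝ (⊤ : ℕ∞) (a i) ∧ Integrable (a i) ∧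
    ∀ k : ℕ, ∃ C : ℝ, ∀ x, ‖iteratedFDeriv ℝ k (a i) x‖ ≤ C

/-- `u`, `∂u/∂t` and the spatial derivatives of `u` up to order two are bounded by a
constant multiple of `(1+|x|)^{-(n+1)}`, uniformly for `t` in compact intervals. -/
def AdmissibleDecay {n : ℕ} (u : ℝ × Spc n → ℝ) : Prop :=
  ∀ T > (0 : ℝ), ∃ C : ℝ, ∀ t : ℝ, ∀ x : Spc n, |t| ≤ T →
    |u (t, x)| ≤ C * (1 + ‖x‖) ^ (-(n + 1 : ℝ)) ∧
    |timeDeriv u t x| ≤ C * (1 + ‖x‖) ^ (-(n + 1 : ℝ)) ∧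
    ‖fderiv ℝ (fun y => u (t, y)) x‖ ≤ C * (1 + ‖x‖) ^ (-(n + 1 : ℝ)) ∧
    ‖iteratedFDeriv ℝ 2 (fun y => u (t, y)) x‖ ≤ C * (1 + ‖x‖) ^ (-(n + 1 : ℝ))

/-!
The lower bound is the upper bound for `-u`: since `N` is odd, `-u` solves the same kind of
equation, with coefficients `(-1)^(i+1) aᵢ`.

For the upper bound put `M₀ = 1 + 2 N B`, where `B` bounds the `|aᵢ|`. Where `u ≥ M₀` the
nonlinearity is at most `-u^N/2`, so `u` is a subsolution of an ODE with solutions that come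
down from `+∞` in finite time.
Compare `u` on `[t₀, t₁] × ℝⁿ` with `M₀ + (t - τ)^(-1/(N-1))`, choosing `τ < t₀` so that the
barrier exceeds the slab bound of `u` at time `t₀`. If `u` rose above the barrier, then
`u - ε‖x‖² - barrier` would have a positive maximum at some time after `t₀` (the penalty
sends it to `-∞` as `‖x‖ → ∞`). At that maximum `∂ₜ ≥ 0` and `Δ ≤ 2nε`, which contradicts the
equation. One unit of time after `τ` the barrier is below `1`, hence `u ≤ M₀ + 1`.
-/

open Set

theorem HasDerivAt.nonneg_of_eventually_le_left {g : ℝ → ℝ} {d b : ℝ} (hg : HasDerivAt g d b)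
    (hmax : ∀ᶠ s in 𝓝[<] b, g s ≤ g b) : 0 ≤ d := by
  refine ge_of_tendsto ((hasDerivAt_iff_tendsto_slope.1 hg).mono_left (nhdsLT_le_nhdsNE b)) ?_
  filter_upwards [hmax, self_mem_nhdsWithin] with s hs hsb
  rw [slope_def_field]
  exact div_nonneg_of_nonpos (sub_nonpos.2 hs) (sub_nonpos.2 hsb.le)

theorem IsLocalMax.second_deriv_nonpos {h h' : ℝ → ℝ} {x d : ℝ} (hmax : IsLocalMax h x)
    (hd : ∀ᶠ s in 𝓝 x, HasDerivAt h (h' s) s) (hd' : HasDerivAt h' d x) : d ≤ 0 := by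
  by_contra! hd0
  have h'x : h' x = 0 := hmax.hasDerivAt_eq_zero hd.self_of_nhds
  have hpos : ∀ᶠ s in 𝓝[>] x, 0 < h' s := by
    filter_upwards [nhdsGT_le_nhdsNE x ((hasDerivAt_iff_tendsto_slope.1 hd').eventually
      (eventually_gt_nhds hd0)), self_mem_nhdsWithin] with s hs hxs
    exact pos_of_slope_pos hxs hs h'x
  obtain ⟨η, hxη, hη⟩ := mem_nhdsGT_iff_exists_Ioo_subset.1
    (hpos.and (nhdsWithin_le_nhds (hd.and hmax)))
  set s := (x + η) / 2
  have hxs : x < s := by simp only [s]; linarith [hxη.out]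
  have hsη : s ∈ Ioo x η := ⟨hxs, by simp only [s]; linarith [hxη.out]⟩
  have hderiv : ∀ c ∈ Icc x s, HasDerivAt h (h' c) c := by
    rintro c ⟨hxc, hcs⟩
    rcases hxc.eq_or_lt with rfl | hxc
    · exact hd.self_of_nhds
    · exact (hη ⟨hxc, hcs.trans_lt hsη.2⟩).2.1
  obtain ⟨c, hc, hslope⟩ := exists_hasDerivAt_eq_slope h h' hxs
    (fun c hc => (hderiv c hc).continuousAt.continuousWithinAt)
    (fun c hc => hderiv c (Ioo_subset_Icc_self hc))
  have hc' : 0 < h' c := (hη ⟨hc.1, hc.2.trans hsη.2⟩).1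
  have : h s ≤ h x := (hη hsη).2.2
  rw [hslope] at hc'
  exact (div_pos_iff_of_pos_right (sub_pos.2 hxs)).1 hc' |>.not_ge (sub_nonpos.2 this)

section Laplacian
variable {n : ℕ}

theorem contDiff_fderiv_apply {f : Spc n → ℝ} (hf : ContDiff ℝ 2 f) (v : Spc n) :
    ContDiff ℝ 1 (fun y => fderiv ℝ f y v) :=
  (ContinuousLinearMap.apply ℝ ℝ v).contDiff.comp (hf.fderiv_right (by norm_num))

theorem lap_neg (f : Spc n → ℝ) (x : Spc n) : lap (fun y => -f y) x = -lap f x := by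
  simp only [lap, fderiv_fun_neg, neg_apply, Finset.sum_neg_distrib]

theorem lap_sub {f g : Spc n → ℝ} (hf : ContDiff ℝ 2 f) (hg : ContDiff ℝ 2 g) (x : Spc n) :
    lap (fun y => f y - g y) x = lap f x - lap g x := by
  simp only [lap, ← Finset.sum_sub_distrib]
  refine Finset.sum_congr rfl fun i _ => ?_
  set e : Spc n := EuclideanSpace.single i 1
  have hfg : (fun y => fderiv ℝ (fun y' => f y' - g y') y e)
      = fun y => fderiv ℝ f y e - fderiv ℝ g y e := by
    funext y
    rw [fderiv_fun_sub (hf.differentiable (by norm_num) y) (hg.differentiable (by norm_num) y),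
      sub_apply]
  rw [hfg, fderiv_fun_sub ((contDiff_fderiv_apply hf e).differentiable one_ne_zero x)
    ((contDiff_fderiv_apply hg e).differentiable one_ne_zero x), sub_apply]

theorem lap_const_mul {f : Spc n → ℝ} (hf : ContDiff ℝ 2 f) (c : ℝ) (x : Spc n) :
    lap (fun y => c * f y) x = c * lap f x := by
  simp only [lap, Finset.mul_sum]
  refine Finset.sum_congr rfl fun i _ => ?_
  set e : Spc n := EuclideanSpace.single i 1
  have hcf : (fun y => fderiv ℝ (fun y' => c * f y') y e) = fun y => c * fderiv ℝ f y e := by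
    funext y
    rw [fderiv_const_mul (hf.differentiable (by norm_num) y), smul_apply, smul_eq_mul]
  rw [hcf, fderiv_const_mul ((contDiff_fderiv_apply hf e).differentiable one_ne_zero x),
    smul_apply, smul_eq_mul]

theorem lap_norm_sq (x : Spc n) : lap (fun y => ‖y‖ ^ 2) x = 2 * n := by
  have hterm : ∀ i : Fin n, fderiv ℝ (fun y => fderiv ℝ (fun y' : Spc n => ‖y'‖ ^ 2) y
      (EuclideanSpace.single i 1)) x (EuclideanSpace.single i 1) = 2 := by
    intro i
    set e : Spc n := EuclideanSpace.single i 1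
    have hlin : (fun y => fderiv ℝ (fun y' : Spc n => ‖y'‖ ^ 2) y e)
        = fun y => 2 * innerSL ℝ e y := by
      funext y
      rw [fderiv_norm_sq_apply]
      simp [real_inner_comm]
    rw [hlin, ((innerSL ℝ e).hasFDerivAt.const_mul 2).fderiv]
    simp [e]
  simp only [lap, hterm, Finset.sum_const, Finset.card_univ, Fintype.card_fin, nsmul_eq_mul]
  ring

theorem IsLocalMax.lap_nonpos {f : Spc n → ℝ} (hf : ContDiff ℝ 2 f) {z : Spc n}
    (hmax : IsLocalMax f z) : lap f z ≤ 0 := by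
  refine Finset.sum_nonpos fun i _ => ?_
  set e : Spc n := EuclideanSpace.single i 1
  set L : ℝ → Spc n := fun s => z + s • e
  have hL : ∀ s, HasDerivAt L e s := fun s => by
    simpa [L] using ((hasDerivAt_id s).smul_const e).const_add z
  have hL0 : L 0 = z := by simp [L]
  have hmaxL : IsLocalMax (f ∘ L) 0 := by
    rw [← hL0] at hmax
    exact hmax.comp_continuous (hL 0).continuousAt
  refine hmaxL.second_deriv_nonpos (h' := fun s => fderiv ℝ f (L s) e)
    (Eventually.of_forall fun s => ?_) ?_
  · exact (hf.differentiable (by norm_num) _).hasFDerivAt.comp_hasDerivAt s (hL s)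
  · have := ((contDiff_fderiv_apply hf e).differentiable one_ne_zero (L 0)).hasFDerivAt
      |>.comp_hasDerivAt 0 (hL 0)
    rwa [hL0] at this

theorem lap_le_of_isMaxOn {f : Spc n → ℝ} (hf : ContDiff ℝ 2 f) {ε : ℝ} {z : Spc n}
    (hmax : IsMaxOn (fun y => f y - ε * ‖y‖ ^ 2) univ z) : lap f z ≤ 2 * n * ε := by
  have hpen : ContDiff ℝ 2 (fun y : Spc n => ε * ‖y‖ ^ 2) :=
    contDiff_const.mul (contDiff_norm_sq ℝ)
  have := (hmax.isLocalMax univ_mem).lap_nonpos (hf.sub hpen)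
  rw [lap_sub hf hpen, lap_const_mul (contDiff_norm_sq ℝ), lap_norm_sq] at this
  linarith

end Laplacian

theorem Pfun_le_neg_half_pow {n N : ℕ} {B : ℝ} {a : Fin N → Spc n → ℝ}
    (hB : ∀ i x, |a i x| ≤ B) {f : Spc n → ℝ} {x : Spc n} (h1 : 1 ≤ f x)
    (hNB : 2 * N * B ≤ f x) : Pfun a f x ≤ -(f x ^ N) / 2 := by
  set m := f x
  have hterm : ∀ i : Fin N, m * (a i x * m ^ (i : ℕ)) ≤ B * m ^ N := fun i => by
    calc m * (a i x * m ^ (i : ℕ)) = a i x * m ^ ((i : ℕ) + 1) := by ring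
      _ ≤ B * m ^ N := mul_le_mul (abs_le.1 (hB i x)).2 (pow_le_pow_right₀ h1 i.isLt)
          (by positivity) ((abs_nonneg _).trans (hB i x))
  have hsum : m * ∑ i : Fin N, a i x * m ^ (i : ℕ) ≤ m * (m ^ N / 2) :=
    calc m * ∑ i : Fin N, a i x * m ^ (i : ℕ) = ∑ i : Fin N, m * (a i x * m ^ (i : ℕ)) :=
          Finset.mul_sum _ _ _
      _ ≤ ∑ _i : Fin N, B * m ^ N := Finset.sum_le_sum fun i _ => hterm i
      _ = N * B * m ^ N := by
          simp only [Finset.sum_const, Finset.card_univ, Fintype.card_fin, nsmul_eq_mul]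
          ring
      _ ≤ m / 2 * m ^ N := mul_le_mul_of_nonneg_right (by linarith) (by positivity)
      _ = m * (m ^ N / 2) := by ring
  have hsum' := le_of_mul_le_mul_left hsum (by linarith)
  unfold Pfun
  linarith

theorem neg_half_pow_add_le {N : ℕ} (hN : 3 ≤ N) {M₀ y m : ℝ} (hM₀ : 0 ≤ M₀) (hy : 0 ≤ y)
    (hm : M₀ + y ≤ m) : -(m ^ N) / 2 + ((N : ℝ) - 1)⁻¹ * y ^ N ≤ -(M₀ ^ N) / 2 := by
  have hγ : ((N : ℝ) - 1)⁻¹ ≤ 1 / 2 := by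
    rw [inv_le_comm₀ (by norm_num; omega) (by norm_num)]
    have : (3 : ℝ) ≤ N := by exact_mod_cast hN
    linarith
  have hsuper : M₀ ^ N + y ^ N ≤ m ^ N :=
    (pow_add_pow_le hM₀ hy (by omega)).trans (pow_le_pow_left₀ (by positivity) hm N)
  nlinarith [pow_nonneg hy N]

/-- The solution `(t - τ)^(-1/(N-1))` of `y' = -y^N/(N-1)`, which comes down from `+∞`
at `t = τ`. -/
def barrier (N : ℕ) (τ t : ℝ) : ℝ := (t - τ) ^ (-((N : ℝ) - 1)⁻¹)

section Barrier
variable {N : ℕ} {τ t : ℝ}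

theorem barrier_pos (h : τ < t) : 0 < barrier N τ t :=
  Real.rpow_pos_of_pos (sub_pos.2 h) _

theorem hasDerivAt_barrier (hN : 2 ≤ N) (h : τ < t) :
    HasDerivAt (barrier N τ) (-((N : ℝ) - 1)⁻¹ * barrier N τ t ^ N) t := by
  have hN1 : (N : ℝ) - 1 ≠ 0 := by
    have : (2 : ℝ) ≤ N := by exact_mod_cast hN
    linarith
  have hexp : -((N : ℝ) - 1)⁻¹ - 1 = -((N : ℝ) - 1)⁻¹ * N := by field_simp; ring
  have hpow : barrier N τ t ^ N = (t - τ) ^ (-((N : ℝ) - 1)⁻¹ - 1) := by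
    rw [barrier, ← Real.rpow_natCast, ← Real.rpow_mul (sub_pos.2 h).le, hexp]
  rw [hpow, ← mul_one (_ * _)]
  exact (Real.hasDerivAt_rpow_const (Or.inl (sub_pos.2 h).ne')).comp t
    ((hasDerivAt_id t).sub_const τ)

theorem barrier_le_one (hN : 1 ≤ N) (h : 1 ≤ t - τ) : barrier N τ t ≤ 1 :=
  Real.rpow_le_one_of_one_le_of_nonpos h
    (neg_nonpos.2 (inv_nonneg.2 (sub_nonneg.2 (by exact_mod_cast hN))))

theorem barrier_sub_rpow (hN : 2 ≤ N) {c : ℝ} (hc : 0 < c) :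
    barrier N (t - c ^ (-((N : ℝ) - 1))) t = c := by
  have hN1 : (N : ℝ) - 1 ≠ 0 := by
    have : (2 : ℝ) ≤ N := by exact_mod_cast hN
    linarith
  rw [barrier, sub_sub_cancel, ← Real.rpow_mul hc.le, neg_mul_neg, mul_inv_cancel₀ hN1,
    Real.rpow_one]

end Barrier

theorem exists_isMaxOn_prod_univ {E : Type*} [NormedAddCommGroup E] [ProperSpace E]
    {K : Set ℝ} (hK : IsCompact K) {w : ℝ × E → ℝ} (hw : ContinuousOn w (K ×ˢ univ))
    {p₀ : ℝ × E} (hp₀ : p₀ ∈ K ×ˢ univ) {R : ℝ}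
    (hR : ∀ t ∈ K, ∀ x, R < ‖x‖ → w (t, x) ≤ w p₀) :
    ∃ p ∈ K ×ˢ univ, IsMaxOn w (K ×ˢ univ) p := by
  refine hw.exists_isMaxOn' (hK.isClosed.prod isClosed_univ) hp₀ ?_
  rw [eventually_inf_principal]
  filter_upwards [(hK.prod (isCompact_closedBall (0 : E) R)).compl_mem_cocompact]
    with ⟨t, x⟩ hout ⟨ht, _⟩
  exact hR t ht x (lt_of_not_ge fun hx => hout ⟨ht, by simpa using hx⟩)

theorem hasDerivAt_timeDeriv {n : ℕ} {u : ℝ × Spc n → ℝ} (hu : Differentiable ℝ u) (t : ℝ)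
    (x : Spc n) : HasDerivAt (fun s => u (s, x)) (timeDeriv u t x) t :=
  (hu.comp (differentiable_id.prodMk (differentiable_const x)) t).hasDerivAt

theorem IsSol.not_isMaxOn_sub_barrier {n N : ℕ} (hN : 3 ≤ N) {B : ℝ}
    {a : Fin N → Spc n → ℝ} (hB : ∀ i x, |a i x| ≤ B) {u : ℝ × Spc n → ℝ}
    (hu : ContDiff ℝ 2 u) (hsol : IsSol a u) {τ t₀ t₁ ε ts : ℝ} {xs : Spc n} (hτ : τ < ts)
    (hts : ts ∈ Ioc t₀ t₁) (hε : 2 * n * ε < (1 + 2 * N * B) ^ N / 2)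
    (hm : 1 + 2 * N * B + barrier N τ ts ≤ u (ts, xs)) :
    ¬ IsMaxOn (fun q => u q - ε * ‖q.2‖ ^ 2 - (1 + 2 * N * B + barrier N τ q.1))
      (Icc t₀ t₁ ×ˢ univ) (ts, xs) := by
  intro hmax
  have hNB : 0 ≤ 2 * (N : ℝ) * B := by
    have := (abs_nonneg _).trans (hB ⟨0, by omega⟩ 0)
    positivity
  have hy := barrier_pos (N := N) hτ
  have htime : 0 ≤ timeDeriv u ts xs + ((N : ℝ) - 1)⁻¹ * barrier N τ ts ^ N := by
    refine HasDerivAt.nonneg_of_eventually_le_left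
      (g := fun s => u (s, xs) - ε * ‖xs‖ ^ 2 - (1 + 2 * N * B + barrier N τ s)) (b := ts) ?_ ?_
    · exact (((hasDerivAt_timeDeriv (hu.differentiable two_ne_zero) ts xs).sub_const
        (ε * ‖xs‖ ^ 2)).sub ((hasDerivAt_barrier (by omega) hτ).const_add _)).congr_deriv
        (by ring)
    · filter_upwards [Ioo_mem_nhdsLT hts.1] with s hs
      exact hmax ⟨⟨hs.1.le, hs.2.le.trans hts.2⟩, trivial⟩
  have hlap : lap (fun y => u (ts, y)) xs ≤ 2 * n * ε := by
    refine lap_le_of_isMaxOn (hu.comp (contDiff_const.prodMk contDiff_id)) fun y _ => ?_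
    have := hmax (⟨⟨hts.1.le, hts.2⟩, trivial⟩ : (ts, y) ∈ Icc t₀ t₁ ×ˢ univ)
    change u (ts, y) - ε * ‖y‖ ^ 2 ≤ u (ts, xs) - ε * ‖xs‖ ^ 2
    simp only [mem_ofPred_eq] at this
    linarith
  have hP := Pfun_le_neg_half_pow hB (f := fun y => u (ts, y)) (x := xs)
    (by linarith) (by linarith)
  have := neg_half_pow_add_le hN (by positivity) hy.le hm
  have := hsol ts xs
  linarith

theorem IsSol.sub_mul_norm_sq_le_add_barrier {n N : ℕ} (hN : 3 ≤ N) {B : ℝ}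
    {a : Fin N → Spc n → ℝ} (hB : ∀ i x, |a i x| ≤ B) {u : ℝ × Spc n → ℝ}
    (hu : ContDiff ℝ 2 u) (hsol : IsSol a u) {τ t₀ t₁ C ε : ℝ} (hτ : τ < t₀) (ht : t₀ ≤ t₁)
    (hC : ∀ t ∈ Icc t₀ t₁, ∀ x, u (t, x) ≤ C)
    (h₀ : ∀ x, u (t₀, x) ≤ 1 + 2 * N * B + barrier N τ t₀) (hε : 0 < ε)
    (hεn : 2 * n * ε < (1 + 2 * N * B) ^ N / 2) (x₁ : Spc n) :
    u (t₁, x₁) - ε * ‖x₁‖ ^ 2 ≤ 1 + 2 * N * B + barrier N τ t₁ := by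
  have hNB : 0 ≤ 2 * (N : ℝ) * B := by
    have := (abs_nonneg _).trans (hB ⟨0, by omega⟩ 0)
    positivity
  have hτt : ∀ t ∈ Icc t₀ t₁, τ < t := fun t ht => hτ.trans_le ht.1
  set w : ℝ × Spc n → ℝ := fun q => u q - ε * ‖q.2‖ ^ 2 - (1 + 2 * N * B + barrier N τ q.1)
  have hw : ContinuousOn w (Icc t₀ t₁ ×ˢ univ) := fun q hq =>
    ((hu.continuous.sub (by fun_prop)).continuousAt.sub (continuousAt_const.add
      ((hasDerivAt_barrier (by omega) (hτt q.1 hq.1)).continuousAt.comp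
        continuous_fst.continuousAt))).continuousWithinAt
  have hp₁ : (t₁, x₁) ∈ Icc t₀ t₁ ×ˢ univ := ⟨⟨ht, le_rfl⟩, trivial⟩
  by_contra! hw₁
  replace hw₁ : 0 < w (t₁, x₁) := by simp only [w]; linarith
  have hfar : ∀ t ∈ Icc t₀ t₁, ∀ x, √(|C| / ε) < ‖x‖ → w (t, x) ≤ w (t₁, x₁) := by
    intro t ht x hx
    have hx2 := (Real.sqrt_lt' ((Real.sqrt_nonneg _).trans_lt hx)).1 hx
    rw [div_lt_iff₀ hε] at hx2
    have := hC t ht x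
    have := barrier_pos (N := N) (hτt t ht)
    have := le_abs_self C
    simp only [w]
    linarith
  obtain ⟨⟨ts, xs⟩, ⟨hts, -⟩, hmax⟩ := exists_isMaxOn_prod_univ isCompact_Icc hw hp₁ hfar
  have hws : 0 < w (ts, xs) := hw₁.trans_le (hmax hp₁)
  simp only [w] at hws
  have hpen := mul_nonneg hε.le (sq_nonneg ‖xs‖)
  have hts₀ : t₀ < ts := by
    refine hts.1.lt_of_ne fun h => ?_
    subst h
    linarith [h₀ xs]
  exact hsol.not_isMaxOn_sub_barrier hN hB hu (hτt ts hts) ⟨hts₀, hts.2⟩ hεn (by linarith) hmax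

theorem IsSol.le_add_barrier {n N : ℕ} (hN : 3 ≤ N) {B : ℝ} {a : Fin N → Spc n → ℝ}
    (hB : ∀ i x, |a i x| ≤ B) {u : ℝ × Spc n → ℝ} (hu : ContDiff ℝ 2 u) (hsol : IsSol a u)
    {τ t₀ t₁ C : ℝ} (hτ : τ < t₀) (ht : t₀ ≤ t₁) (hC : ∀ t ∈ Icc t₀ t₁, ∀ x, u (t, x) ≤ C)
    (h₀ : ∀ x, u (t₀, x) ≤ 1 + 2 * N * B + barrier N τ t₀) (x₁ : Spc n) :
    u (t₁, x₁) ≤ 1 + 2 * N * B + barrier N τ t₁ := by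
  have hM₀ : 0 < 1 + 2 * (N : ℝ) * B := by
    have := (abs_nonneg _).trans (hB ⟨0, by omega⟩ 0)
    positivity
  have hsmall : ∀ᶠ ε in 𝓝[>] (0 : ℝ), 2 * n * ε < (1 + 2 * N * B) ^ N / 2 :=
    nhdsWithin_le_nhds <| (by fun_prop : Continuous fun ε : ℝ => 2 * n * ε).continuousAt
      |>.eventually_lt continuousAt_const (by simpa using pow_pos hM₀ N)
  refine le_of_tendsto (x := 𝓝[>] 0) (f := fun ε => u (t₁, x₁) - ε * ‖x₁‖ ^ 2) ?_ ?_
  · exact ((continuous_const.sub (continuous_id.mul continuous_const)).tendsto' 0 _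
      (by simp)).mono_left nhdsWithin_le_nhds
  · filter_upwards [hsmall, self_mem_nhdsWithin] with ε hεn hε
    exact hsol.sub_mul_norm_sq_le_add_barrier hN hB hu hτ ht hC h₀ hε hεn x₁

theorem IsSol.le_of_bounded_on_slabs {n N : ℕ} (hN : 3 ≤ N) {B : ℝ} {a : Fin N → Spc n → ℝ}
    (hB : ∀ i x, |a i x| ≤ B) {u : ℝ × Spc n → ℝ} (hu : ContDiff ℝ 2 u) (hsol : IsSol a u)
    (hslab : ∀ T > (0 : ℝ), ∃ C : ℝ, ∀ (t : ℝ) (x : Spc n), |t| ≤ T → |u (t, x)| ≤ C)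
    (p : ℝ × Spc n) : u p ≤ 2 + 2 * N * B := by
  obtain ⟨t₁, x₁⟩ := p
  obtain ⟨C, hC⟩ := hslab (|t₁| + 1) (by positivity)
  have hC₁ : ∀ t ∈ Icc (t₁ - 1) t₁, ∀ x, u (t, x) ≤ C := fun t ht x =>
    (le_abs_self _).trans (hC t x (abs_le.2
      ⟨by linarith [neg_abs_le t₁, ht.1], by linarith [le_abs_self t₁, ht.2]⟩))
  have hC0 : 0 ≤ C := (abs_nonneg _).trans (hC t₁ x₁ (by linarith))
  have hNB : 0 ≤ 2 * (N : ℝ) * B := by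
    have := (abs_nonneg _).trans (hB ⟨0, by omega⟩ 0)
    positivity
  set τ := t₁ - 1 - (C + 1) ^ (-((N : ℝ) - 1)) with hτ
  have hδ : 0 < (C + 1) ^ (-((N : ℝ) - 1)) := Real.rpow_pos_of_pos (by linarith) _
  have hstart : barrier N τ (t₁ - 1) = C + 1 := barrier_sub_rpow (by omega) (by linarith)
  have hend : barrier N τ t₁ ≤ 1 := barrier_le_one (by omega) (by linarith)
  have := hsol.le_add_barrier hN hB hu (τ := τ) (t₀ := t₁ - 1) (t₁ := t₁) (by linarith)
    (by linarith) hC₁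
    (fun x => by linarith [hC₁ (t₁ - 1) ⟨le_rfl, by linarith⟩ x]) x₁
  linarith

theorem Pfun_neg {n N : ℕ} (hodd : Odd N) (a : Fin N → Spc n → ℝ) (f : Spc n → ℝ)
    (x : Spc n) :
    Pfun (fun i z => (-1 : ℝ) ^ ((i : ℕ) + 1) * a i z) (fun y => -f y) x = -Pfun a f x := by
  have hterm : ∀ i : Fin N,
      (-1 : ℝ) ^ ((i : ℕ) + 1) * a i x * (-f x) ^ (i : ℕ) = -(a i x * f x ^ (i : ℕ)) := by
    intro i
    have hsign : (-1 : ℝ) ^ ((i : ℕ) + 1) * (-1) ^ (i : ℕ) = -1 := by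
      rw [← pow_add]
      exact Odd.neg_one_pow ⟨i, by ring⟩
    rw [neg_pow]
    linear_combination (a i x * f x ^ (i : ℕ)) * hsign
  simp only [Pfun, hodd.neg_pow, hterm, Finset.sum_neg_distrib]
  ring

theorem timeDeriv_neg {n : ℕ} (u : ℝ × Spc n → ℝ) (t : ℝ) (x : Spc n) :
    timeDeriv (fun q => -u q) t x = -timeDeriv u t x :=
  deriv.neg

theorem IsSol.neg {n N : ℕ} (hodd : Odd N) {a : Fin N → Spc n → ℝ} {u : ℝ × Spc n → ℝ}
    (hsol : IsSol a u) :
    IsSol (fun i z => (-1 : ℝ) ^ ((i : ℕ) + 1) * a i z) (fun q => -u q) := by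
  intro t x
  rw [timeDeriv_neg, hsol t x, lap_neg, Pfun_neg hodd]
  ring

/-- Let `N ≥ 2` be odd. There is a constant `M`, depending only on `N`
and a bound `B` on `max_i ‖aᵢ‖_∞`, such that every smooth global solution of the PDE which
is bounded on each slab `[-T,T] × ℝⁿ` satisfies `|u| ≤ M` on all of `ℝ^{n+1}`. -/
theorem odd_degree_solutions_bounded
    {N : ℕ} (hN : 2 ≤ N) (hodd : Odd N) (B : ℝ) :
    ∃ M : ℝ, ∀ n : ℕ, 1 ≤ n →
      ∀ a : Fin N → Spc n → ℝ, GoodCoeffs a → (∀ i x, |a i x| ≤ B) →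
      ∀ u : ℝ × Spc n → ℝ, ContDiff ℝ (⊤ : ℕ∞) u → IsSol a u →
      (∀ T > (0 : ℝ), ∃ C : ℝ, ∀ (t : ℝ) (x : Spc n), |t| ≤ T → |u (t, x)| ≤ C) →
      ∀ p : ℝ × Spc n, |u p| ≤ M := by
  refine ⟨2 + 2 * N * B, fun n _ a _ hB u hu hsol hslab p => ?_⟩
  have hN3 : 3 ≤ N := by
    obtain ⟨k, rfl⟩ := hodd
    omega
  have hu2 : ContDiff ℝ 2 u := hu.of_le (WithTop.coe_le_coe.2 le_top)
  have hupper := hsol.le_of_bounded_on_slabs hN3 hB hu2 hslab p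
  have hlower : -u p ≤ 2 + 2 * N * B :=
    (hsol.neg hodd).le_of_bounded_on_slabs hN3 (fun i x => by simpa [abs_mul] using hB i x)
      hu2.neg (fun T hT => (hslab T hT).imp fun C hC t x ht => by simpa using hC t x ht) p
  exact abs_le.2 ⟨by linarith, hupper⟩

end
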